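/- (Identity for M^c) For every n ≥ 2, ∑_{i=1}^{n−1} ∑_{j=i+1}^{n} M(j−i−1)·M(n+i−j−1) = ∑_{k=0}^{⌊(n−2)/2⌋} n!/(k!·(k+2)!·(n−2−2k)!), which equals ∑_{k=0}^{⌊(n−2)/2⌋} (n choose (2k+2))·((2k+2) choose k). -/
import Mathlib


/-- The Motzkin numbers: `M 0 = 1`, `M 1 = 1` and, for `n ≥ 2`,
`M n = M (n-1) + ∑_{i=0}^{n-2} M i * M (n-2-i)`. -/
def motzkin : ℕ → ℕ
  | 0 => 1
  | 1 => 1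
  | n + 2 =>
      motzkin (n + 1) +
        ∑ i ∈ (Finset.range (n + 1)).attach, motzkin i.1 * motzkin (n - i.1)
decreasing_by
  all_goals
    first
      | omega
      | (have h := Finset.mem_range.mp i.2; omega)

open Finset

def msum (n : ℕ) : ℕ := ∑ k ∈ Finset.range (n + 1), n.choose (2 * k) * catalan k

/-- Vandermonde-type convolution of binomial coefficients. -/
lemma vand (n : ℕ) : ∀ r s : ℕ,
    ∑ i ∈ range (n + 1), (Nat.choose i r) * (Nat.choose (n - i) s)
      = (n + 1).choose (r + s + 1) := by
  induction n with
  | zero =>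
    intro r s
    rcases r with _ | r <;> rcases s with _ | s <;>
      simp [Nat.choose_eq_zero_of_lt, Nat.succ_lt_succ, Nat.succ_pos]
  | succ n ih =>
    intro r s
    cases s with
    | zero =>
      rw [sum_range_succ]
      have h1 : ∑ i ∈ range (n + 1), Nat.choose i r * Nat.choose (n + 1 - i) 0
          = ∑ i ∈ range (n + 1), Nat.choose i r * Nat.choose (n - i) 0 := by
        simp
      rw [h1, ih r 0]
      simp [Nat.choose_succ_succ (n + 1) r]
      omega
    | succ s =>
      rw [sum_range_succ]
      have key : ∀ i ∈ range (n + 1), Nat.choose i r * Nat.choose (n + 1 - i) (s + 1)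
          = Nat.choose i r * Nat.choose (n - i) s + Nat.choose i r * Nat.choose (n - i) (s + 1) := by
        intro i hi
        have hi' : i ≤ n := by have := mem_range.mp hi; omega
        have h2 : n + 1 - i = (n - i) + 1 := by omega
        rw [h2, Nat.choose_succ_succ, Nat.mul_add]
      rw [sum_congr rfl key, sum_add_distrib, ih r s, ih r (s + 1)]
      have e1 : r + (s + 1) + 1 = (r + s + 1) + 1 := by omega
      rw [e1, Nat.choose_succ_succ (n + 1) (r + s + 1)]
      simp

/-- Reindex a triangular double sum along diagonals. -/
lemma tri_reindex (f : ℕ → ℕ → ℕ) : ∀ N : ℕ,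
    ∑ j ∈ range N, ∑ l ∈ range (N - j), f j l
      = ∑ s ∈ range N, ∑ t ∈ range (s + 1), f t (s - t) := by
  intro N
  induction N with
  | zero => simp
  | succ N ih =>
    have h1 : ∀ j ∈ range (N + 1), (∑ l ∈ range (N + 1 - j), f j l)
        = (∑ l ∈ range (N - j), f j l) + f j (N - j) := by
      intro j hj
      have hj' : j ≤ N := by have := mem_range.mp hj; omega
      have h2 : N + 1 - j = (N - j) + 1 := by omega
      rw [h2, sum_range_succ]
    rw [sum_congr rfl h1, sum_add_distrib,
      sum_range_succ (fun j => ∑ l ∈ range (N - j), f j l)]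
    simp only [Nat.sub_self, range_zero, sum_empty, add_zero]
    rw [ih, sum_range_succ (fun s => ∑ t ∈ range (s + 1), f t (s - t)),
      sum_range_succ (fun t => f t (N - t))]

lemma msum_ext {i N : ℕ} (h : i ≤ N) :
    msum i = ∑ k ∈ range (N + 1), i.choose (2 * k) * catalan k := by
  rw [msum]
  apply sum_subset (range_subset_range.mpr (by omega))
  intro k hk hk'
  have : i < 2 * k := by
    have h1 := mem_range.mp hk
    have h2 : ¬ k < i + 1 := fun hlt => hk' (mem_range.mpr hlt)
    omega
  rw [Nat.choose_eq_zero_of_lt this, zero_mul]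

lemma catalan_conv (s : ℕ) :
    ∑ t ∈ range (s + 1), catalan t * catalan (s - t) = catalan (s + 1) := by
  rw [catalan_succ',
    Finset.Nat.sum_antidiagonal_eq_sum_range_succ_mk (fun ij => catalan ij.1 * catalan ij.2) s]

lemma conv_msum (n : ℕ) :
    ∑ i ∈ range (n + 1), msum i * msum (n - i)
      = ∑ s ∈ range (n + 1), (n + 1).choose (2 * s + 1) * catalan (s + 1) := by
  have step1 : ∀ i ∈ range (n + 1), msum i * msum (n - i)
      = ∑ j ∈ range (n + 1), ∑ l ∈ range (n + 1),
          (i.choose (2 * j) * catalan j) * ((n - i).choose (2 * l) * catalan l) := by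
    intro i hi
    have hi' : i ≤ n := by have := mem_range.mp hi; omega
    rw [msum_ext hi', msum_ext (Nat.sub_le n i), sum_mul_sum]
  rw [sum_congr rfl step1]
  rw [sum_comm]
  have step2 : ∀ j ∈ range (n + 1),
      (∑ i ∈ range (n + 1), ∑ l ∈ range (n + 1),
        (i.choose (2 * j) * catalan j) * ((n - i).choose (2 * l) * catalan l))
      = ∑ l ∈ range (n + 1), catalan j * catalan l * (n + 1).choose (2 * j + 2 * l + 1) := by
    intro j _
    rw [sum_comm]
    refine sum_congr rfl fun l _ => ?_
    have : ∑ i ∈ range (n + 1),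
        (i.choose (2 * j) * catalan j) * ((n - i).choose (2 * l) * catalan l)
        = catalan j * catalan l * ∑ i ∈ range (n + 1), i.choose (2 * j) * (n - i).choose (2 * l) := by
      rw [mul_sum]
      exact sum_congr rfl fun i _ => by ring
    rw [this, vand n (2 * j) (2 * l)]
  rw [sum_congr rfl step2]
  -- shrink inner range
  have step3 : ∀ j ∈ range (n + 1),
      (∑ l ∈ range (n + 1), catalan j * catalan l * (n + 1).choose (2 * j + 2 * l + 1))
      = ∑ l ∈ range (n + 1 - j), catalan j * catalan l * (n + 1).choose (2 * j + 2 * l + 1) := by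
    intro j hj
    refine (sum_subset (range_subset_range.mpr (by omega)) ?_).symm
    intro l hl hl'
    have h1 : n + 1 - j ≤ l := by
      have h2 : ¬ l < n + 1 - j := fun h => hl' (mem_range.mpr h)
      omega
    have : n + 1 < 2 * j + 2 * l + 1 := by omega
    rw [Nat.choose_eq_zero_of_lt this, mul_zero]
  rw [sum_congr rfl step3,
    tri_reindex (fun j l => catalan j * catalan l * (n + 1).choose (2 * j + 2 * l + 1)) (n + 1)]
  refine sum_congr rfl fun s hs => ?_
  have : ∀ t ∈ range (s + 1),
      catalan t * catalan (s - t) * (n + 1).choose (2 * t + 2 * (s - t) + 1)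
      = (n + 1).choose (2 * s + 1) * (catalan t * catalan (s - t)) := by
    intro t ht
    have ht' : t ≤ s := by have := mem_range.mp ht; omega
    have e : 2 * t + 2 * (s - t) = 2 * s := by omega
    rw [e]; ring
  rw [sum_congr rfl this, ← mul_sum, catalan_conv]

lemma msum_rec (n : ℕ) : msum (n + 2)
    = msum (n + 1) + ∑ s ∈ range (n + 1), (n + 1).choose (2 * s + 1) * catalan (s + 1) := by
  have h1 : msum (n + 2) = ∑ k ∈ range (n + 2), (n + 2).choose (2 * k) * catalan k := by
    rw [msum, sum_range_succ, Nat.choose_eq_zero_of_lt (by omega), zero_mul, add_zero]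
  rw [h1, sum_range_succ' (fun k => (n + 2).choose (2 * k) * catalan k) (n + 1)]
  have h2 : ∀ k ∈ range (n + 1), (n + 2).choose (2 * (k + 1)) * catalan (k + 1)
      = (n + 1).choose (2 * k + 1) * catalan (k + 1)
        + (n + 1).choose (2 * k + 2) * catalan (k + 1) := by
    intro k _
    have e : 2 * (k + 1) = (2 * k + 1) + 1 := by ring
    rw [e, Nat.choose_succ_succ, add_mul]
  rw [sum_congr rfl h2, sum_add_distrib]
  have h3 : msum (n + 1) = (∑ k ∈ range (n + 1), (n + 1).choose (2 * k + 2) * catalan (k + 1)) + 1 := by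
    rw [msum, sum_range_succ' (fun k => (n + 1).choose (2 * k) * catalan k) (n + 1)]
    simp [mul_add]
  rw [h3]
  simp [Nat.choose_zero_right, catalan_zero]
  ring

lemma motzkin_eq : ∀ n, motzkin n = msum n := by
  intro n
  induction n using Nat.strong_induction_on with
  | _ n ih =>
    match n with
    | 0 => simp [motzkin, msum]
    | 1 =>
      rw [show motzkin 1 = 1 by rw [motzkin], msum]
      rw [sum_range_succ, sum_range_one]
      simp [Nat.choose]
    | (n + 2) =>
      rw [show motzkin (n + 2) = motzkin (n + 1) +
          ∑ i ∈ (Finset.range (n + 1)).attach, motzkin i.1 * motzkin (n - i.1) from by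
        rw [motzkin]]
      rw [Finset.sum_attach (range (n + 1)) (fun i => motzkin i * motzkin (n - i))]
      rw [ih (n + 1) (by omega)]
      have h1 : ∀ i ∈ range (n + 1), motzkin i * motzkin (n - i) = msum i * msum (n - i) := by
        intro i hi
        rw [ih i (by have := mem_range.mp hi; omega), ih (n - i) (by omega)]
      rw [sum_congr rfl h1, conv_msum, msum_rec]

lemma conv_motzkin (n : ℕ) :
    ∑ i ∈ range (n + 1), motzkin i * motzkin (n - i)
      = ∑ s ∈ range (n + 1), (n + 1).choose (2 * s + 1) * catalan (s + 1) := by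
  rw [sum_congr rfl (fun i hi => by rw [motzkin_eq i, motzkin_eq (n - i)]), conv_msum]

lemma term_eq (m s : ℕ) :
    (m + 2) * ((m + 1).choose (2 * s + 1) * catalan (s + 1))
      = 2 * ((m + 2).choose (2 * s + 2) * (2 * s + 2).choose s) := by
  apply Nat.eq_of_mul_eq_mul_left (show 0 < s + 2 by omega)
  have hc : (s + 2) * catalan (s + 1) = Nat.centralBinom (s + 1) :=
    succ_mul_catalan_eq_centralBinom (s + 1)
  have hcb : Nat.centralBinom (s + 1) = (2 * s + 2).choose (s + 1) := rfl
  have h2 : (m + 2) * Nat.choose (m + 1) (2 * s + 1)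
      = Nat.choose (m + 2) (2 * s + 2) * (2 * s + 2) :=
    Nat.add_one_mul_choose_eq (m + 1) (2 * s + 1)
  have h3 : Nat.choose (2 * s + 2) (s + 1) * (s + 1) = Nat.choose (2 * s + 2) s * (s + 2) := by
    have h := Nat.choose_succ_right_eq (2 * s + 2) s
    rwa [show 2 * s + 2 - s = s + 2 from by omega] at h
  calc (s + 2) * ((m + 2) * ((m + 1).choose (2 * s + 1) * catalan (s + 1)))
      = ((m + 2) * Nat.choose (m + 1) (2 * s + 1)) * ((s + 2) * catalan (s + 1)) := by ring
    _ = (Nat.choose (m + 2) (2 * s + 2) * (2 * s + 2)) * Nat.choose (2 * s + 2) (s + 1) := by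
        rw [h2, hc, hcb]
    _ = (2 * Nat.choose (m + 2) (2 * s + 2)) * (Nat.choose (2 * s + 2) (s + 1) * (s + 1)) := by
        ring
    _ = (2 * Nat.choose (m + 2) (2 * s + 2)) * (Nat.choose (2 * s + 2) s * (s + 2)) := by rw [h3]
    _ = (s + 2) * (2 * ((m + 2).choose (2 * s + 2) * (2 * s + 2).choose s)) := by ring

lemma fact_eq (m k : ℕ) (h : 2 * k ≤ m) :
    (m + 2).factorial / (k.factorial * (k + 2).factorial * (m - 2 * k).factorial)
      = (m + 2).choose (2 * k + 2) * (2 * k + 2).choose k := by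
  have h1 : Nat.choose (m + 2) (2 * k + 2) * (2 * k + 2).factorial * (m - 2 * k).factorial
      = (m + 2).factorial := by
    have h' := Nat.choose_mul_factorial_mul_factorial (show 2 * k + 2 ≤ m + 2 by omega)
    rwa [show m + 2 - (2 * k + 2) = m - 2 * k from by omega] at h'
  have h2 : Nat.choose (2 * k + 2) k * k.factorial * (k + 2).factorial
      = (2 * k + 2).factorial := by
    have h' := Nat.choose_mul_factorial_mul_factorial (show k ≤ 2 * k + 2 by omega)
    rwa [show 2 * k + 2 - k = k + 2 from by omega] at h'
  refine Nat.div_eq_of_eq_mul_left (by positivity) ?_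
  rw [← h1, ← h2]; ring

/-- Identity for `M^c`: for every `n ≥ 2`,
`∑_{i=1}^{n-1} ∑_{j=i+1}^{n} M (j-i-1) * M (n+i-j-1)
  = ∑_{k=0}^{⌊(n-2)/2⌋} n! / (k! (k+2)! (n-2-2k)!)
  = ∑_{k=0}^{⌊(n-2)/2⌋} (n choose (2k+2)) ⬝ ((2k+2) choose k)`. -/
theorem Mc_closed_form (n : ℕ) (hn : 2 ≤ n) :
    (∑ i ∈ Finset.Icc 1 (n - 1), ∑ j ∈ Finset.Icc (i + 1) n,
          motzkin (j - i - 1) * motzkin (n + i - j - 1)) =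
        ∑ k ∈ Finset.range ((n - 2) / 2 + 1),
          n.factorial / (k.factorial * (k + 2).factorial * (n - 2 - 2 * k).factorial) ∧
      (∑ i ∈ Finset.Icc 1 (n - 1), ∑ j ∈ Finset.Icc (i + 1) n,
          motzkin (j - i - 1) * motzkin (n + i - j - 1)) =
        ∑ k ∈ Finset.range ((n - 2) / 2 + 1),
          n.choose (2 * k + 2) * (2 * k + 2).choose k := by
  obtain ⟨m, rfl⟩ : ∃ m, n = m + 2 := ⟨n - 2, by omega⟩
  clear hn
  simp only [show m + 2 - 1 = m + 1 from rfl, show m + 2 - 2 = m from rfl]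
  -- Step 1: reduce the double sum
  have hL : (∑ i ∈ Finset.Icc 1 (m + 1), ∑ j ∈ Finset.Icc (i + 1) (m + 2),
        motzkin (j - i - 1) * motzkin (m + 2 + i - j - 1))
      = ∑ t ∈ range (m + 1), (m + 1 - t) * (motzkin t * motzkin (m - t)) := by
    have inner : ∀ i ∈ Finset.Icc 1 (m + 1),
        (∑ j ∈ Finset.Icc (i + 1) (m + 2), motzkin (j - i - 1) * motzkin (m + 2 + i - j - 1))
          = ∑ t ∈ range (m + 2 - i), motzkin t * motzkin (m - t) := by
      intro i hi
      obtain ⟨hi1, hi2⟩ := Finset.mem_Icc.mp hi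
      rw [← Finset.Ico_add_one_right_eq_Icc, Finset.sum_Ico_eq_sum_range]
      rw [show m + 2 + 1 - (i + 1) = m + 2 - i from by omega]
      refine sum_congr rfl fun t ht => ?_
      have ht' : t < m + 2 - i := mem_range.mp ht
      congr 1
      · congr 1; omega
      · congr 1; omega
    rw [sum_congr rfl inner]
    rw [← Finset.Ico_add_one_right_eq_Icc, Finset.sum_Ico_eq_sum_range]
    rw [show m + 1 + 1 - 1 = m + 1 from by omega]
    have e : ∀ u ∈ range (m + 1),
        (∑ t ∈ range (m + 2 - (1 + u)), motzkin t * motzkin (m - t))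
          = ∑ t ∈ range (m + 1 - u), motzkin t * motzkin (m - t) := by
      intro u hu
      rw [show m + 2 - (1 + u) = m + 1 - u from by omega]
    rw [sum_congr rfl e]
    rw [sum_comm' (t := fun u => range (m + 1 - u)) (s' := fun t => range (m + 1 - t))
      (t' := range (m + 1)) (by intro x y; simp only [mem_range]; omega)]
    refine sum_congr rfl fun t ht => ?_
    rw [sum_const, card_range, smul_eq_mul]
  rw [hL]
  -- Step 2: double the sum
  have key2 : 2 * (∑ t ∈ range (m + 1), (m + 1 - t) * (motzkin t * motzkin (m - t)))
      = (m + 2) * ∑ t ∈ range (m + 1), motzkin t * motzkin (m - t) := by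
    have hrefl : (∑ t ∈ range (m + 1), (m + 1 - t) * (motzkin t * motzkin (m - t)))
        = ∑ t ∈ range (m + 1), (t + 1) * (motzkin t * motzkin (m - t)) := by
      rw [← sum_range_reflect (fun t => (m + 1 - t) * (motzkin t * motzkin (m - t))) (m + 1)]
      refine sum_congr rfl fun t ht => ?_
      have ht' : t ≤ m := by have := mem_range.mp ht; omega

      rw [show m + 1 - 1 - t = m - t from by omega,
        show m + 1 - (m - t) = t + 1 from by omega,
        show m - (m - t) = t from by omega]
      ring
    rw [two_mul]
    nth_rewrite 2 [hrefl]
    rw [← sum_add_distrib, mul_sum]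
    refine sum_congr rfl fun t ht => ?_
    have ht' : t ≤ m := by have := mem_range.mp ht; omega
    rw [← Nat.add_mul, show m + 1 - t + (t + 1) = m + 2 from by omega]
  -- Step 3: right-hand side
  have hR : (m + 2) * (∑ t ∈ range (m + 1), motzkin t * motzkin (m - t))
      = 2 * ∑ k ∈ range (m / 2 + 1), (m + 2).choose (2 * k + 2) * (2 * k + 2).choose k := by
    rw [conv_motzkin, mul_sum, mul_sum]
    have hext : (∑ k ∈ range (m / 2 + 1), 2 * ((m + 2).choose (2 * k + 2) * (2 * k + 2).choose k))
        = ∑ k ∈ range (m + 1), 2 * ((m + 2).choose (2 * k + 2) * (2 * k + 2).choose k) := by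
      apply sum_subset (range_subset_range.mpr (by omega))
      intro k hk hk'
      have hk1 : ¬ k < m / 2 + 1 := fun h => hk' (mem_range.mpr h)
      rw [Nat.choose_eq_zero_of_lt (by omega), zero_mul, mul_zero]
    rw [hext]
    exact sum_congr rfl fun s _ => term_eq m s
  have main2 : (∑ t ∈ range (m + 1), (m + 1 - t) * (motzkin t * motzkin (m - t)))
      = ∑ k ∈ range (m / 2 + 1), (m + 2).choose (2 * k + 2) * (2 * k + 2).choose k := by
    apply Nat.eq_of_mul_eq_mul_left (show 0 < 2 by omega)
    rw [key2, hR]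
  refine ⟨?_, main2⟩
  rw [main2]
  refine sum_congr rfl fun k hk => ?_
  have hk' : k < m / 2 + 1 := mem_range.mp hk
  exact (fact_eq m k (by omega)).symm
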